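/- Let n ≥ 2 be an even integer, let p ∈ [0,1]^n, let z ∈ {0,1}^n be the rounded frequency vector defined by z_i = 1 if p_i ≥ 1/2 and z_i = 0 otherwise, and suppose there exists k > 0 such that a sample from the univariate model with frequency vector p is an optimum of EqualBlocksOneMax with probability at least n^{-k}. Let x^{(1)}, ..., x^{(m)} be m independent samples from the univariate model with frequency vector p. Then with probability at least 1 − m · n^{-2k/3}, every one of the m samples lies within Hamming distance 4k · ln(n) of z. -/
import Mathlib


/-- The probability that the univariate model with frequency vector `p` samples
exactly the bit string `x` (bits are independent, bit `i` is `true` with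
probability `p i`). -/
noncomputable def univMass {n : ℕ} (p : Fin n → ℝ) (x : Fin n → Bool) : ℝ :=
  ∏ i, if x i then p i else 1 - p i

open scoped Classical in
/-- The probability that a sample from the univariate model with frequency
vector `p` satisfies the predicate `A`. -/
noncomputable def univPr {n : ℕ} (p : Fin n → ℝ) (A : (Fin n → Bool) → Prop) : ℝ :=
  ∑ x : Fin n → Bool, if A x then univMass p x else 0

/-- `x` is an optimum of EqualBlocksOneMax on bit strings of length `2 * m`:
every block (pair of positions `2j` and `2j+1`, zero-based) has two equal bits. -/
def IsEBOMOptimum (m : ℕ) (x : Fin (2 * m) → Bool) : Prop :=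
  ∀ j : Fin m,
    x ⟨2 * j.1, by have := j.2; omega⟩ = x ⟨2 * j.1 + 1, by have := j.2; omega⟩

open scoped Classical in
/-- The probability that `M` independent samples from the univariate model with
frequency vector `p` jointly satisfy the predicate `A`. -/
noncomputable def univPrVec {n M : ℕ} (p : Fin n → ℝ)
    (A : (Fin M → Fin n → Bool) → Prop) : ℝ :=
  ∑ xs : Fin M → Fin n → Bool, if A xs then ∏ t, ∏ i, (if xs t i then p i else 1 - p i) else 0

set_option maxHeartbeats 1000000

open Finset Real

lemma sum_prod_pi {ι κ : Type*} [Fintype ι] [Fintype κ] [DecidableEq ι] (g : ι → κ → ℝ) :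
    ∑ x : ι → κ, ∏ i, g i (x i) = ∏ i, ∑ c, g i c := by
  classical
  rw [Finset.prod_univ_sum (fun _ => (univ : Finset κ)) g, Fintype.piFinset_univ]

lemma ite_forall_prod {ι : Type*} [Fintype ι] (P : ι → Prop) [DecidablePred P]
    [Decidable (∀ i, P i)] (c : ι → ℝ) :
    (if ∀ i, P i then ∏ i, c i else 0) = ∏ i, if P i then c i else 0 := by
  by_cases h : ∀ i, P i
  · rw [if_pos h]
    exact Finset.prod_congr rfl fun i _ => (if_pos (h i)).symm
  · rw [if_neg h]
    push_neg at h; obtain ⟨i, hi⟩ := h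
    refine (Finset.prod_eq_zero (mem_univ i) ?_).symm
    exact if_neg hi

def blockEquiv (m : ℕ) : Fin m × Bool ≃ Fin (2 * m) where
  toFun jb := ⟨2 * jb.1.1 + (if jb.2 then 1 else 0), by
    obtain ⟨⟨j, hj⟩, b⟩ := jb; cases b <;> simp <;> omega⟩
  invFun i := (⟨i.1 / 2, by have := i.2; omega⟩, decide (i.1 % 2 = 1))
  left_inv := by
    rintro ⟨⟨j, hj⟩, b⟩
    cases b <;> simp [Prod.ext_iff, Fin.ext_iff] <;> omega
  right_inv := by
    rintro ⟨i, hi⟩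
    by_cases h : i % 2 = 1 <;> simp [h, Fin.ext_iff] <;> omega

def posA (m : ℕ) (j : Fin m) : Fin (2 * m) := ⟨2 * j.1, by have := j.2; omega⟩
def posB (m : ℕ) (j : Fin m) : Fin (2 * m) := ⟨2 * j.1 + 1, by have := j.2; omega⟩

@[simp] lemma blockEquiv_false (m : ℕ) (j : Fin m) : blockEquiv m (j, false) = posA m j := rfl
@[simp] lemma blockEquiv_true (m : ℕ) (j : Fin m) : blockEquiv m (j, true) = posB m j := rfl

lemma prod_reindex (m : ℕ) (h : Fin (2 * m) → ℝ) :
    ∏ i, h i = ∏ j : Fin m, h (posA m j) * h (posB m j) := by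
  calc ∏ i, h i = ∏ jb : Fin m × Bool, h (blockEquiv m jb) :=
        (Fintype.prod_equiv (blockEquiv m) _ h (fun _ => rfl)).symm
    _ = ∏ j, ∏ b, h (blockEquiv m (j, b)) := Fintype.prod_prod_type _
    _ = ∏ j : Fin m, h (posA m j) * h (posB m j) := by
        refine Finset.prod_congr rfl fun j _ => ?_
        rw [Fintype.prod_bool]; simp [mul_comm]

lemma sum_reindex (m : ℕ) (h : Fin (2 * m) → ℝ) :
    ∑ i, h i = ∑ j : Fin m, (h (posA m j) + h (posB m j)) := by
  calc ∑ i, h i = ∑ jb : Fin m × Bool, h (blockEquiv m jb) :=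
        (Fintype.sum_equiv (blockEquiv m) _ h (fun _ => rfl)).symm
    _ = ∑ j, ∑ b, h (blockEquiv m (j, b)) := Fintype.sum_prod_type _
    _ = _ := by
        refine Finset.sum_congr rfl fun j _ => ?_
        rw [Fintype.sum_bool]; simp [add_comm]

lemma sum_prod_blocks (m : ℕ) (G : Fin m → Bool → Bool → ℝ) :
    ∑ x : Fin (2 * m) → Bool, ∏ j, G j (x (posA m j)) (x (posB m j))
      = ∏ j, ∑ a : Bool, ∑ b : Bool, G j a b := by
  classical
  have h1 : ∑ x : Fin (2 * m) → Bool, ∏ j, G j (x (posA m j)) (x (posB m j))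
      = ∑ y : Fin m × Bool → Bool, ∏ j, G j (y (j, false)) (y (j, true)) := by
    refine Fintype.sum_equiv ((Equiv.arrowCongr (blockEquiv m) (Equiv.refl Bool)).symm)
      _ _ fun x => ?_
    refine Finset.prod_congr rfl fun j _ => ?_
    simp [Equiv.arrowCongr]
  have h2 : ∑ y : Fin m × Bool → Bool, ∏ j, G j (y (j, false)) (y (j, true))
      = ∑ w : Fin m → Bool → Bool, ∏ j, G j (w j false) (w j true) :=
    Fintype.sum_equiv (Equiv.curry _ _ _) _ _ fun y => rfl
  have h3 : ∑ w : Fin m → Bool → Bool, ∏ j, G j (w j false) (w j true)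
      = ∏ j, ∑ f : Bool → Bool, G j (f false) (f true) :=
    sum_prod_pi (fun j (f : Bool → Bool) => G j (f false) (f true))
  have h4 : ∀ j, (∑ f : Bool → Bool, G j (f false) (f true)) = ∑ a : Bool, ∑ b : Bool, G j a b := by
    intro j
    calc (∑ f : Bool → Bool, G j (f false) (f true))
        = ∑ q : Bool × Bool, G j q.1 q.2 :=
          Fintype.sum_equiv (Equiv.boolArrowEquivProd Bool) _ _ fun f => rfl
      _ = ∑ a : Bool, ∑ b : Bool, G j a b := Fintype.sum_prod_type _
  rw [h1, h2, h3]
  exact Finset.prod_congr rfl fun j _ => h4 j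

theorem all_samples_in_hamming_ball
    (m : ℕ) (hm : 1 ≤ m)
    (p : Fin (2 * m) → ℝ) (hp : ∀ i, p i ∈ Set.Icc (0 : ℝ) 1)
    (z : Fin (2 * m) → Bool) (hz : ∀ i, z i = true ↔ (1 : ℝ) / 2 ≤ p i)
    (k : ℝ) (hk : 0 < k)
    (hE : ((2 * m : ℕ) : ℝ) ^ (-k) ≤ univPr p (IsEBOMOptimum m))
    (M : ℕ) (hM : 0 < M) :
    1 - (M : ℝ) * ((2 * m : ℕ) : ℝ) ^ (-(2 * k / 3)) ≤
      univPrVec p (fun xs : Fin M → Fin (2 * m) → Bool =>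
        ∀ t : Fin M,
          (hammingDist (xs t) z : ℝ) ≤ 4 * k * Real.log ((2 * m : ℕ) : ℝ)) := by
  classical
  set N : ℝ := ((2 * m : ℕ) : ℝ) with hNdef
  have hN2 : (2 : ℝ) ≤ N := by
    rw [hNdef]
    have : (1 : ℝ) ≤ (m : ℝ) := by exact_mod_cast hm
    push_cast; linarith
  have hN0 : (0 : ℝ) < N := by linarith
  have hlogN0 : (0 : ℝ) < Real.log N := Real.log_pos (by linarith)
  set f : Fin (2 * m) → Bool → ℝ := fun i b => if b then p i else 1 - p i with hfdef
  have hf0 : ∀ i b, 0 ≤ f i b := by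
    intro i b
    have := hp i
    cases b <;> simp [hfdef] <;> [linarith [this.2]; exact this.1]
  have hmass : ∀ x : Fin (2 * m) → Bool, univMass p x = ∏ i, f i (x i) := fun x => rfl
  have hmass0 : ∀ x, 0 ≤ univMass p x := fun x => by
    rw [hmass]; exact Finset.prod_nonneg fun i _ => hf0 i (x i)
  set q : Fin (2 * m) → ℝ := fun i => if z i then 1 - p i else p i with hqdef
  have hq0 : ∀ i, 0 ≤ q i := by
    intro i; have := hp i
    by_cases h : z i <;> simp [hqdef, h] <;> [linarith [this.2]; exact this.1]
  have hq2 : ∀ i, q i ≤ 1 / 2 := by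
    intro i
    by_cases h : z i
    · have := (hz i).mp (by simpa using h); simp [hqdef, h]; linarith
    · have : ¬ ((1:ℝ)/2 ≤ p i) := fun hh => h (by simpa using (hz i).mpr hh)
      simp [hqdef, h]; linarith [this]
  set S : ℝ := ∑ i, q i with hSdef
  -- Step A : probability of the optimum factorizes over blocks
  have hopt_eq : univPr p (IsEBOMOptimum m)
      = ∏ j : Fin m, (f (posA m j) false * f (posB m j) false
          + f (posA m j) true * f (posB m j) true) := by
    rw [univPr]
    have step : ∀ x : Fin (2 * m) → Bool, (if IsEBOMOptimum m x then univMass p x else 0)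
        = ∏ j : Fin m, (if x (posA m j) = x (posB m j)
            then f (posA m j) (x (posA m j)) * f (posB m j) (x (posB m j)) else 0) := by
      intro x
      have hiff : IsEBOMOptimum m x ↔ ∀ j : Fin m, x (posA m j) = x (posB m j) := Iff.rfl
      by_cases h : IsEBOMOptimum m x
      · rw [if_pos h]
        rw [Finset.prod_congr rfl fun j _ => if_pos (hiff.mp h j)]
        rw [hmass]
        exact prod_reindex m (fun i => f i (x i))
      · rw [if_neg h]
        have h2 : ¬ (∀ j : Fin m, x (posA m j) = x (posB m j)) := fun hh => h (hiff.mpr hh)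
        push_neg at h2; obtain ⟨j, hj⟩ := h2
        refine (Finset.prod_eq_zero (Finset.mem_univ j) ?_).symm
        exact if_neg hj
    rw [Finset.sum_congr rfl fun x _ => step x,
        sum_prod_blocks m (fun j a b => if a = b then f (posA m j) a * f (posB m j) b else 0)]
    refine Finset.prod_congr rfl fun j _ => ?_
    rw [Fintype.sum_bool, Fintype.sum_bool, Fintype.sum_bool]
    norm_num
    ring
  -- Step B : each block factor is at most exp(-(q a + q b)/2)
  have hfF : ∀ i, f i false = 1 - p i := fun i => rfl
  have hfT : ∀ i, f i true = p i := fun i => rfl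
  have hhalf : ∀ i, (1 / 2 ≤ p i ∧ q i = 1 - p i) ∨ (p i ≤ 1 / 2 ∧ q i = p i) := by
    intro i
    by_cases h : z i = true
    · exact Or.inl ⟨(hz i).mp h, by show (if z i then 1 - p i else p i) = _; rw [if_pos h]⟩
    · refine Or.inr ⟨?_, by show (if z i then 1 - p i else p i) = _; rw [if_neg h]⟩
      by_contra hh
      exact h ((hz i).mpr (by linarith [lt_of_not_ge hh]))
  have hblock : ∀ j : Fin m,
      f (posA m j) false * f (posB m j) false + f (posA m j) true * f (posB m j) true
        ≤ Real.exp (-((q (posA m j) + q (posB m j)) / 2)) := by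
    intro j
    set a := posA m j
    set b := posB m j
    have hpa := hp a; have hpb := hp b
    have key : (1 - p a) * (1 - p b) + p a * p b ≤ 1 - (q a + q b) / 2 := by
      rcases hhalf a with ⟨ha2, ha3⟩ | ⟨ha2, ha3⟩ <;>
        rcases hhalf b with ⟨hb2, hb3⟩ | ⟨hb2, hb3⟩ <;> rw [ha3, hb3]
      · nlinarith [mul_nonneg (by linarith : (0:ℝ) ≤ 2 * p a - 1)
            (by linarith [hpb.2] : (0:ℝ) ≤ 1 - p b),
          mul_nonneg (by linarith : (0:ℝ) ≤ 2 * p b - 1)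
            (by linarith [hpa.2] : (0:ℝ) ≤ 1 - p a)]
      · nlinarith [mul_nonneg (by linarith : (0:ℝ) ≤ 2 * p a - 1)
            (by linarith : (0:ℝ) ≤ 1 - 2 * p b)]
      · nlinarith [mul_nonneg (by linarith : (0:ℝ) ≤ 2 * p b - 1)
            (by linarith : (0:ℝ) ≤ 1 - 2 * p a)]
      · nlinarith [mul_nonneg hpa.1 (by linarith : (0:ℝ) ≤ 1 - 2 * p b),
          mul_nonneg hpb.1 (by linarith : (0:ℝ) ≤ 1 - 2 * p a)]
    have hexp := Real.add_one_le_exp (-((q a + q b) / 2))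
    rw [hfF, hfF, hfT, hfT]
    linarith
  -- Step C : optimum probability is at most exp(-S/2)
  have hsumS : S = ∑ j : Fin m, (q (posA m j) + q (posB m j)) := sum_reindex m q
  have hprod_le : univPr p (IsEBOMOptimum m) ≤ Real.exp (-(S / 2)) := by
    rw [hopt_eq]
    calc ∏ j : Fin m, (f (posA m j) false * f (posB m j) false
            + f (posA m j) true * f (posB m j) true)
        ≤ ∏ j : Fin m, Real.exp (-((q (posA m j) + q (posB m j)) / 2)) := by
          refine Finset.prod_le_prod (fun j _ => ?_) (fun j _ => hblock j)
          exact add_nonneg (mul_nonneg (hf0 _ _) (hf0 _ _)) (mul_nonneg (hf0 _ _) (hf0 _ _))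
      _ = Real.exp (∑ j : Fin m, -((q (posA m j) + q (posB m j)) / 2)) :=
          (Real.exp_sum _ _).symm
      _ = Real.exp (-(S / 2)) := by
          congr 1
          rw [hsumS, Finset.sum_div, ← Finset.sum_neg_distrib]
  -- Step D : S ≤ 2 k log N
  have hS : S ≤ 2 * k * Real.log N := by
    have h1 : Real.exp (Real.log N * (-k)) ≤ Real.exp (-(S / 2)) := by
      rw [← Real.rpow_def_of_pos hN0]
      exact hE.trans hprod_le
    have h2 := Real.exp_le_exp.mp h1
    nlinarith
  -- Step E : moment bound
  have hl2 : (2:ℝ)/3 < Real.log 2 := by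
    have := Real.log_two_gt_d9; linarith
  have hmgf : ∑ x : Fin (2 * m) → Bool, univMass p x * (2:ℝ) ^ (hammingDist x z)
      ≤ Real.exp S := by
    have h1 : ∀ x : Fin (2 * m) → Bool, univMass p x * (2:ℝ) ^ (hammingDist x z)
        = ∏ i, (f i (x i) * (if x i ≠ z i then (2:ℝ) else 1)) := by
      intro x
      rw [Finset.prod_mul_distrib, ← hmass]
      congr 1
      rw [show (hammingDist x z) = (Finset.univ.filter fun i => x i ≠ z i).card from rfl]
      rw [← Finset.prod_const, Finset.prod_filter]
    rw [Finset.sum_congr rfl fun x _ => h1 x,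
        sum_prod_pi (fun i b => f i b * (if b ≠ z i then (2:ℝ) else 1))]
    have h2 : ∀ i, (∑ c : Bool, f i c * (if c ≠ z i then (2:ℝ) else 1)) = 1 + q i := by
      intro i
      rw [Fintype.sum_bool]
      by_cases h : z i = true
      · rw [show q i = 1 - p i from by
            show (if z i then 1 - p i else p i) = _; rw [if_pos h]]
        rw [hfF, hfT]; simp [h]; ring
      · rw [show q i = p i from by
            show (if z i then 1 - p i else p i) = _; rw [if_neg h]]
        rw [hfF, hfT]; simp [h]; ring
    rw [Finset.prod_congr rfl fun i _ => h2 i]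
    calc ∏ i, (1 + q i) ≤ ∏ i, Real.exp (q i) := by
          refine Finset.prod_le_prod (fun i _ => by linarith [hq0 i]) (fun i _ => ?_)
          have := Real.add_one_le_exp (q i); linarith
      _ = Real.exp S := by rw [hSdef, Real.exp_sum]
  -- basic facts about δ = N ^ (-(2k/3))
  have hδ : N ^ (-(2 * k / 3)) = Real.exp (Real.log N * (-(2 * k / 3))) :=
    Real.rpow_def_of_pos hN0 _
  have hδ0 : 0 ≤ N ^ (-(2 * k / 3)) := Real.rpow_nonneg (le_of_lt hN0) _
  have hδ1 : N ^ (-(2 * k / 3)) ≤ 1 :=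
    Real.rpow_le_one_of_one_le_of_nonpos (by linarith) (by nlinarith)
  -- Step F : single-sample tail bound
  have hPbad : (∑ x : Fin (2 * m) → Bool,
      if ¬ ((hammingDist x z : ℝ) ≤ 4 * k * Real.log N) then univMass p x else 0)
      ≤ N ^ (-(2 * k / 3)) := by
    have hterm : ∀ x : Fin (2 * m) → Bool,
        (if ¬ ((hammingDist x z : ℝ) ≤ 4 * k * Real.log N) then univMass p x else 0)
        ≤ Real.exp (-(4 * k * Real.log N * Real.log 2))
            * (univMass p x * (2:ℝ) ^ (hammingDist x z)) := by
      intro x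
      by_cases hgx : (hammingDist x z : ℝ) ≤ 4 * k * Real.log N
      · rw [if_neg (not_not_intro hgx)]
        exact mul_nonneg (Real.exp_nonneg _)
          (mul_nonneg (hmass0 x) (by positivity))
      · rw [if_pos hgx]
        have hH : 4 * k * Real.log N < (hammingDist x z : ℝ) := lt_of_not_ge hgx
        have h2H : (2:ℝ) ^ (hammingDist x z)
            = Real.exp (Real.log 2 * (hammingDist x z)) := by
          rw [mul_comm (Real.log 2) ((hammingDist x z : ℕ) : ℝ), Real.exp_nat_mul,
            Real.exp_log (by norm_num : (0:ℝ) < 2)]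
        have hone : 1 ≤ Real.exp (-(4 * k * Real.log N * Real.log 2))
            * Real.exp (Real.log 2 * (hammingDist x z)) := by
          rw [← Real.exp_add]
          refine Real.one_le_exp ?_
          nlinarith
        calc univMass p x = univMass p x * 1 := (mul_one _).symm
          _ ≤ univMass p x * (Real.exp (-(4 * k * Real.log N * Real.log 2))
                * Real.exp (Real.log 2 * (hammingDist x z))) :=
              mul_le_mul_of_nonneg_left hone (hmass0 x)
          _ = Real.exp (-(4 * k * Real.log N * Real.log 2))
                * (univMass p x * (2:ℝ) ^ (hammingDist x z)) := by
              rw [h2H]; ring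
    calc (∑ x : Fin (2 * m) → Bool,
          if ¬ ((hammingDist x z : ℝ) ≤ 4 * k * Real.log N) then univMass p x else 0)
        ≤ ∑ x : Fin (2 * m) → Bool, Real.exp (-(4 * k * Real.log N * Real.log 2))
            * (univMass p x * (2:ℝ) ^ (hammingDist x z)) :=
          Finset.sum_le_sum (fun x _ => hterm x)
      _ = Real.exp (-(4 * k * Real.log N * Real.log 2))
            * ∑ x : Fin (2 * m) → Bool, univMass p x * (2:ℝ) ^ (hammingDist x z) := by
          rw [Finset.mul_sum]
      _ ≤ Real.exp (-(4 * k * Real.log N * Real.log 2)) * Real.exp S :=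
          mul_le_mul_of_nonneg_left hmgf (Real.exp_nonneg _)
      _ = Real.exp (S - 4 * k * Real.log N * Real.log 2) := by
          rw [← Real.exp_add]; ring_nf
      _ ≤ N ^ (-(2 * k / 3)) := by
          rw [hδ]
          refine Real.exp_le_exp.mpr ?_
          have hw : 0 ≤ k * Real.log N := le_of_lt (mul_pos hk hlogN0)
          nlinarith [mul_nonneg hw (by linarith : (0:ℝ) ≤ 4 * Real.log 2 - 8/3)]
  -- Step G : complement and independent samples
  have htotal : ∑ x : Fin (2 * m) → Bool, univMass p x = 1 := by
    rw [Finset.sum_congr rfl fun x _ => hmass x, sum_prod_pi f]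
    refine Finset.prod_eq_one fun i _ => ?_
    rw [Fintype.sum_bool, hfT, hfF]; ring
  have hsplit : (∑ x : Fin (2 * m) → Bool,
        if (hammingDist x z : ℝ) ≤ 4 * k * Real.log N then univMass p x else 0)
      + (∑ x : Fin (2 * m) → Bool,
        if ¬ ((hammingDist x z : ℝ) ≤ 4 * k * Real.log N) then univMass p x else 0) = 1 := by
    rw [← Finset.sum_add_distrib, ← htotal]
    refine Finset.sum_congr rfl fun x _ => ?_
    by_cases h : (hammingDist x z : ℝ) ≤ 4 * k * Real.log N
    · rw [if_pos h, if_neg (not_not_intro h), add_zero]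
    · rw [if_neg h, if_pos h, zero_add]
  have hPgood : 1 - N ^ (-(2 * k / 3))
      ≤ ∑ x : Fin (2 * m) → Bool,
          if (hammingDist x z : ℝ) ≤ 4 * k * Real.log N then univMass p x else 0 := by
    linarith
  have hvec : univPrVec p (fun xs : Fin M → Fin (2 * m) → Bool =>
        ∀ t : Fin M, (hammingDist (xs t) z : ℝ) ≤ 4 * k * Real.log N)
      = (∑ x : Fin (2 * m) → Bool,
          if (hammingDist x z : ℝ) ≤ 4 * k * Real.log N then univMass p x else 0) ^ M := by
    have key2 : (∑ xs : Fin M → Fin (2 * m) → Bool,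
          ∏ t, (if (hammingDist (xs t) z : ℝ) ≤ 4 * k * Real.log N
            then univMass p (xs t) else 0))
        = (∑ x : Fin (2 * m) → Bool,
            if (hammingDist x z : ℝ) ≤ 4 * k * Real.log N then univMass p x else 0) ^ M := by
      rw [sum_prod_pi (fun (_ : Fin M) (x : Fin (2 * m) → Bool) =>
            if (hammingDist x z : ℝ) ≤ 4 * k * Real.log N then univMass p x else 0)]
      rw [Finset.prod_const, Finset.card_univ, Fintype.card_fin]
    rw [univPrVec]
    refine Eq.trans (Finset.sum_congr rfl fun xs _ => ?_) key2
    by_cases h : ∀ t : Fin M, (hammingDist (xs t) z : ℝ) ≤ 4 * k * Real.log N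
    · rw [if_pos h]
      exact Finset.prod_congr rfl fun t _ => (if_pos (h t)).symm
    · rw [if_neg h]
      push_neg at h; obtain ⟨t, ht⟩ := h
      refine (Finset.prod_eq_zero (Finset.mem_univ t) ?_).symm
      exact if_neg (not_le.mpr ht)
  rw [hvec]
  have hbern : 1 - (M : ℝ) * N ^ (-(2 * k / 3))
      ≤ (1 - N ^ (-(2 * k / 3))) ^ M := by
    have h := one_add_mul_le_pow (a := -(N ^ (-(2 * k / 3)))) (by linarith) M
    calc 1 - (M : ℝ) * N ^ (-(2 * k / 3))
        = 1 + (M : ℝ) * (-(N ^ (-(2 * k / 3)))) := by ring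
      _ ≤ (1 + -(N ^ (-(2 * k / 3)))) ^ M := h
      _ = (1 - N ^ (-(2 * k / 3))) ^ M := by ring_nf
  refine le_trans hbern (pow_le_pow_left₀ (by linarith) hPgood M)
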